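/- Let (A,Ω,α) be a Hom-pre-Lie algebra with product Ω(x,y) = x·y, and let ω : A×A → A be a bilinear map with ω∘(α⊗α) = α∘ω. Then Ω_t = Ω + tω is a Hom-pre-Lie multiplication on A (with the same α) for all scalars t if and only if the following two conditions hold for all x,y,z ∈ A: (1) ω(x,y)·α(z) + ω(x·y, α(z)) − α(x)·ω(y,z) − ω(α(x), y·z) − ω(y,x)·α(z) − ω(y·x, α(z)) + α(y)·ω(x,z) + ω(α(y), x·z) = 0, and (2) ω(ω(x,y), α(z)) − ω(α(x), ω(y,z)) − ω(ω(y,x), α(z)) + ω(α(y), ω(x,z)) = 0. -/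
import Mathlib


/-- A Hom-pre-Lie algebra structure on `A`: a bilinear product and an algebra
morphism `α` satisfying the Hom-pre-Lie identity. -/
def IsHomPreLie {K A : Type*} [Field K] [AddCommGroup A] [Module K A]
    (mul : A →ₗ[K] A →ₗ[K] A) (α : A →ₗ[K] A) : Prop :=
  (∀ x y, α (mul x y) = mul (α x) (α y)) ∧
  (∀ x y z, mul (mul x y) (α z) - mul (α x) (mul y z)
      = mul (mul y x) (α z) - mul (α y) (mul x z))

lemma expansion_aux {K A : Type*} [Field K] [AddCommGroup A] [Module K A]
    (mul ω : A →ₗ[K] A →ₗ[K] A) (α : A →ₗ[K] A) (t : K) (x y z : A) :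
    ((mul + t • ω) ((mul + t • ω) x y) (α z)
        - (mul + t • ω) (α x) ((mul + t • ω) y z))
      - ((mul + t • ω) ((mul + t • ω) y x) (α z)
        - (mul + t • ω) (α y) ((mul + t • ω) x z))
    = (mul (mul x y) (α z) - mul (α x) (mul y z)
        - (mul (mul y x) (α z) - mul (α y) (mul x z)))
      + t • (mul (ω x y) (α z) + ω (mul x y) (α z)
            - mul (α x) (ω y z) - ω (α x) (mul y z)
            - mul (ω y x) (α z) - ω (mul y x) (α z)
            + mul (α y) (ω x z) + ω (α y) (mul x z))
      + (t * t) • (ω (ω x y) (α z) - ω (α x) (ω y z)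
            - ω (ω y x) (α z) + ω (α y) (ω x z)) := by
  simp only [LinearMap.add_apply, LinearMap.smul_apply, map_add, map_smul,
    smul_add, smul_sub, smul_smul]
  module

/-- Let `(A,Ω,α)` be a Hom-pre-Lie algebra (over an infinite
field) and `ω` a bilinear map with `ω∘(α⊗α) = α∘ω`.  Then `Ω_t = Ω + tω` is a
Hom-pre-Lie multiplication on `A` (with the same `α`) for all scalars `t` if and
only if conditions (1) and (2) hold. -/
theorem linear_deformation_iff
    {K A : Type*} [Field K] [Infinite K] [AddCommGroup A] [Module K A]
    (mul : A →ₗ[K] A →ₗ[K] A) (α : A ≃ₗ[K] A)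
    (hA : IsHomPreLie mul (α : A →ₗ[K] A))
    (ω : A →ₗ[K] A →ₗ[K] A) (hω : ∀ x y, α (ω x y) = ω (α x) (α y)) :
    (∀ t : K, IsHomPreLie (mul + t • ω) (α : A →ₗ[K] A)) ↔
      ((∀ x y z,
          mul (ω x y) (α z) + ω (mul x y) (α z)
            - mul (α x) (ω y z) - ω (α x) (mul y z)
            - mul (ω y x) (α z) - ω (mul y x) (α z)
            + mul (α y) (ω x z) + ω (α y) (mul x z) = 0) ∧
        (∀ x y z,
          ω (ω x y) (α z) - ω (α x) (ω y z)
            - ω (ω y x) (α z) + ω (α y) (ω x z) = 0)) := by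
  constructor
  · intro h
    -- key: for all t x y z, t•E1 + t²•E2 = 0
    have key : ∀ (t : K) (x y z : A),
        t • (mul (ω x y) (α z) + ω (mul x y) (α z)
            - mul (α x) (ω y z) - ω (α x) (mul y z)
            - mul (ω y x) (α z) - ω (mul y x) (α z)
            + mul (α y) (ω x z) + ω (α y) (mul x z))
        + (t * t) • (ω (ω x y) (α z) - ω (α x) (ω y z)
            - ω (ω y x) (α z) + ω (α y) (ω x z)) = 0 := by
      intro t x y z
      have h2 := (h t).2 x y z
      have he := expansion_aux mul ω (α : A →ₗ[K] A) t x y z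
      rw [sub_eq_zero.mpr h2] at he
      have h0 : mul (mul x y) ((α : A →ₗ[K] A) z)
          - mul ((α : A →ₗ[K] A) x) (mul y z)
          - (mul (mul y x) ((α : A →ₗ[K] A) z)
          - mul ((α : A →ₗ[K] A) y) (mul x z)) = 0 :=
        sub_eq_zero.mpr (hA.2 x y z)
      rw [h0, zero_add] at he
      exact he.symm
    classical
    obtain ⟨c, hc⟩ := Infinite.exists_notMem_finset ({0, 1} : Finset K)
    simp only [Finset.mem_insert, Finset.mem_singleton, not_or] at hc
    obtain ⟨hc0, hc1⟩ := hc
    have E2zero : ∀ x y z : A,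
        ω (ω x y) (α z) - ω (α x) (ω y z)
          - ω (ω y x) (α z) + ω (α y) (ω x z) = 0 := by
      intro x y z
      have k1 := key 1 x y z
      have kc := key c x y z
      simp only [one_smul, one_mul] at k1
      -- kc : c•E1 + c²•E2 = 0; divide by c: E1 + c•E2 = 0
      have kc' : (mul (ω x y) (α z) + ω (mul x y) (α z)
            - mul (α x) (ω y z) - ω (α x) (mul y z)
            - mul (ω y x) (α z) - ω (mul y x) (α z)
            + mul (α y) (ω x z) + ω (α y) (mul x z))
          + c • (ω (ω x y) (α z) - ω (α x) (ω y z)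
            - ω (ω y x) (α z) + ω (α y) (ω x z)) = 0 := by
        have kc2 := congrArg (fun v => c⁻¹ • v) kc
        simp only [smul_add, smul_smul, smul_zero] at kc2
        rw [inv_mul_cancel₀ hc0,
          show c⁻¹ * (c * c) = c by field_simp] at kc2
        simp only [one_smul] at kc2
        simp only [smul_add] at kc2 ⊢
        exact kc2
      have hsub : (c - 1) • (ω (ω x y) (α z) - ω (α x) (ω y z)
            - ω (ω y x) (α z) + ω (α y) (ω x z)) = 0 := by
        have hce : c • (ω (ω x y) (α z) - ω (α x) (ω y z)
            - ω (ω y x) (α z) + ω (α y) (ω x z))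
            = ω (ω x y) (α z) - ω (α x) (ω y z)
            - ω (ω y x) (α z) + ω (α y) (ω x z) :=
          add_left_cancel (kc'.trans k1.symm)
        rw [sub_smul, one_smul, hce, sub_self]
      have hcm : c - 1 ≠ 0 := sub_ne_zero.mpr hc1
      exact (smul_eq_zero.mp hsub).resolve_left hcm
    refine ⟨fun x y z => ?_, E2zero⟩
    have k1 := key 1 x y z
    simp only [one_smul, one_mul] at k1
    rw [E2zero x y z, add_zero] at k1
    exact k1
  · rintro ⟨h1, h2⟩ t
    constructor
    · intro x y
      simp only [LinearMap.add_apply, LinearMap.smul_apply, map_add, map_smul,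
        LinearEquiv.coe_coe]
      have h1' := hA.1
      simp only [LinearEquiv.coe_coe] at h1'
      rw [h1' x y, hω x y]
    · intro x y z
      rw [← sub_eq_zero]
      rw [expansion_aux mul ω (α : A →ₗ[K] A) t x y z]
      rw [sub_eq_zero.mpr (hA.2 x y z)]
      simp only [LinearEquiv.coe_coe]
      rw [h1 x y z, h2 x y z]
      simp
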